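/- For every profile of matroid rank hospital valuations and strict complete doctor preference orders, there exists a stable allocation that maximizes hospital utilitarian welfare over all allocations. -/

import Mathlib

open Finset

/-- A matroid rank function on subsets of a finite ground set. -/
def IsMRF {α : Type*} [DecidableEq α] (v : Finset α → ℤ) : Prop :=
  v ∅ = 0 ∧
  (∀ (S : Finset α) (d : α), d ∉ S →
    v (insert d S) - v S = 0 ∨ v (insert d S) - v S = 1) ∧
  (∀ (S T : Finset α) (d : α), S ⊆ T → d ∉ T →
    v (insert d T) - v T ≤ v (insert d S) - v S)

/-- The bundle of doctors assigned to hospital `h` under allocation `X`. -/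
def bundle {n m : ℕ} (X : Fin m → Option (Fin n)) (h : Fin n) : Finset (Fin m) :=
  Finset.univ.filter (fun d => X d = some h)

/-- An allocation is non-redundant if every hospital's bundle is independent. -/
def NonRedundant {n m : ℕ} (v : Fin n → Finset (Fin m) → ℤ)
    (X : Fin m → Option (Fin n)) : Prop :=
  ∀ h, v h (bundle X h) = (bundle X h).card

/-- Hospital utilitarian welfare. -/
def USW {n m : ℕ} (v : Fin n → Finset (Fin m) → ℤ) (X : Fin m → Option (Fin n)) : ℤ :=
  ∑ h, v h (bundle X h)

/-- Doctor `d` strictly prefers the first outcome to the second; every hospital is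
strictly preferred to being unallocated (`none`). -/
def OptStrictPref {n m : ℕ} (P : Fin m → Fin n → Fin n → Prop) (d : Fin m) :
    Option (Fin n) → Option (Fin n) → Prop
  | some h, some h' => P d h h'
  | some _, none => True
  | none, _ => False

/-- `(h, S)` is a blocking pair for `X`. -/
def IsBlockingPair {n m : ℕ} (v : Fin n → Finset (Fin m) → ℤ)
    (P : Fin m → Fin n → Fin n → Prop) (X : Fin m → Option (Fin n))
    (h : Fin n) (S : Finset (Fin m)) : Prop :=
  v h S = S.card ∧ v h (bundle X h) < v h S ∧
    ∀ d ∈ S, X d = some h ∨ OptStrictPref P d (some h) (X d)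

/-- An allocation is stable if it is non-redundant and admits no blocking pair. -/
def Stable {n m : ℕ} (v : Fin n → Finset (Fin m) → ℤ)
    (P : Fin m → Fin n → Fin n → Prop) (X : Fin m → Option (Fin n)) : Prop :=
  NonRedundant v X ∧ ¬ ∃ h S, IsBlockingPair v P X h S

/-!
Among non-redundant allocations take one maximizing welfare and, among those, the doctors'
total satisfaction `potential` (a sum of preference ranks). Every allocation has a non-redundant
one of equal welfare (drop doctors whose removal costs nothing), so this choice maximizes welfare
over all allocations. If `(h, S)` blocked it, matroid augmentation would give a doctor `d ∈ S`
outside `h`'s bundle that raises `h`'s value by one. Moving `d` to `h` keeps the allocation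
non-redundant, and either raises welfare (if `d` was unallocated) or keeps it while raising
`potential` (because `d` prefers `h`).
-/

namespace IsMRF

variable {α : Type*} [DecidableEq α] {v : Finset α → ℤ} {S T U : Finset α} {d : α}

lemma insert_eq_or (hv : IsMRF v) (hd : d ∉ S) :
    v (insert d S) = v S ∨ v (insert d S) = v S + 1 := by
  rcases hv.2.1 S d hd with h | h <;> omega

lemma le_insert (hv : IsMRF v) (S : Finset α) (d : α) : v S ≤ v (insert d S) := by
  by_cases hd : d ∈ S
  · rw [insert_eq_of_mem hd]
  · rcases hv.insert_eq_or hd with h | h <;> omega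

lemma insert_le (hv : IsMRF v) (S : Finset α) (d : α) : v (insert d S) ≤ v S + 1 := by
  by_cases hd : d ∈ S
  · rw [insert_eq_of_mem hd]; omega
  · rcases hv.insert_eq_or hd with h | h <;> omega

lemma insert_sub_le_insert_sub (hv : IsMRF v) (hST : S ⊆ T) (hd : d ∉ T) :
    v (insert d T) - v T ≤ v (insert d S) - v S :=
  hv.2.2 S T d hST hd

lemma mono (hv : IsMRF v) (hST : S ⊆ T) : v S ≤ v T := by
  have key : ∀ U : Finset α, v S ≤ v (U ∪ S) := by
    intro U
    induction U using Finset.induction_on with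
    | empty => simp
    | insert a U _ ih => rw [insert_union]; exact ih.trans (hv.le_insert _ a)
  simpa [union_eq_left.mpr hST] using key T

lemma le_card (hv : IsMRF v) (S : Finset α) : v S ≤ #S := by
  induction S using Finset.induction_on with
  | empty => simp [hv.1]
  | insert a S ha ih =>
    rw [card_insert_of_notMem ha]
    have := hv.insert_le S a
    push_cast
    omega

lemma erase_eq_of_eq_card (hv : IsMRF v) (hS : v S = #S) (hd : d ∈ S) :
    v (S.erase d) = #(S.erase d) ∧ v (S.erase d) = v S - 1 := by
  have hle := hv.insert_le (S.erase d) d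
  rw [insert_erase hd] at hle
  have := hv.le_card (S.erase d)
  have := card_erase_add_one hd
  omega

lemma exists_erase_eq_of_lt_card (hv : IsMRF v) (hS : v S < #S) :
    ∃ d ∈ S, v (S.erase d) = v S := by
  induction S using Finset.induction_on with
  | empty => simp [hv.1] at hS
  | insert a S ha ih =>
    rw [card_insert_of_notMem ha] at hS
    rcases hv.insert_eq_or ha with h | h
    · exact ⟨a, mem_insert_self a S, by rw [erase_insert ha, h]⟩
    · obtain ⟨d, hdS, hd⟩ := ih (by push_cast at hS; omega)
      have had : a ≠ d := fun had => ha (had ▸ hdS)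
      have hsub := hv.insert_sub_le_insert_sub (erase_subset d S) ha
      have hup := hv.insert_le (S.erase d) a
      refine ⟨d, mem_insert_of_mem hdS, ?_⟩
      rw [erase_insert_of_ne had]
      omega

lemma union_eq_of_forall_insert_eq (hv : IsMRF v) (h : ∀ d ∈ U, v (insert d T) = v T) :
    v (U ∪ T) = v T := by
  induction U using Finset.induction_on with
  | empty => simp
  | insert a U _ ih =>
    have hU := ih fun d hd => h d (mem_insert_of_mem hd)
    rw [insert_union]
    by_cases haUT : a ∈ U ∪ T
    · rwa [insert_eq_of_mem haUT]
    · have hsub := hv.insert_sub_le_insert_sub subset_union_right haUT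
      have := h a (mem_insert_self a U)
      have := hv.le_insert (U ∪ T) a
      omega

/-- The augmentation property of matroids, phrased with ranks. -/
lemma exists_insert_eq_add_one_of_lt (hv : IsMRF v) (h : v T < v S) :
    ∃ d ∈ S, d ∉ T ∧ v (insert d T) = v T + 1 := by
  by_contra! hno
  have hflat : ∀ d ∈ S, v (insert d T) = v T := by
    intro d hdS
    by_cases hdT : d ∈ T
    · rw [insert_eq_of_mem hdT]
    · exact (hv.insert_eq_or hdT).resolve_right (hno d hdS hdT)
  have := hv.mono (subset_union_left : S ⊆ S ∪ T)
  rw [hv.union_eq_of_forall_insert_eq hflat] at this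
  omega

end IsMRF

section Allocation

variable {n m : ℕ} {v : Fin n → Finset (Fin m) → ℤ} {X : Fin m → Option (Fin n)}
  {d : Fin m} {h g : Fin n}

@[simp]
lemma mem_bundle : d ∈ bundle X h ↔ X d = some h := by
  simp [bundle]

lemma bundle_update_none (X : Fin m → Option (Fin n)) (d : Fin m) (g : Fin n) :
    bundle (Function.update X d none) g = (bundle X g).erase d := by
  ext e
  by_cases he : e = d <;> simp [he]

lemma bundle_update_some_self (X : Fin m → Option (Fin n)) (d : Fin m) (h : Fin n) :
    bundle (Function.update X d (some h)) h = insert d (bundle X h) := by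
  ext e
  by_cases he : e = d <;> simp [he]

lemma bundle_update_some_of_ne (X : Fin m → Option (Fin n)) (d : Fin m) (hg : g ≠ h) :
    bundle (Function.update X d (some h)) g = (bundle X g).erase d := by
  ext e
  by_cases he : e = d <;> simp [he, Ne.symm hg]

lemma bundle_erase_of_ne (hXd : X d ≠ some g) : (bundle X g).erase d = bundle X g :=
  erase_eq_of_notMem (mem_bundle.not.mpr hXd)

lemma USW_update_none (hXd : X d = some h)
    (hrem : v h ((bundle X h).erase d) = v h (bundle X h)) :
    USW v (Function.update X d none) = USW v X := by
  refine sum_congr rfl fun g _ => ?_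
  rw [bundle_update_none]
  rcases eq_or_ne g h with rfl | hg
  · exact hrem
  · rw [bundle_erase_of_ne (by simp [hXd, Ne.symm hg])]

lemma card_allocated_update_none_lt (hXd : X d ≠ none) :
    #{e | Function.update X d none e ≠ none} < #{e | X e ≠ none} := by
  have : ({e | Function.update X d none e ≠ none} : Finset (Fin m)) =
      ({e | X e ≠ none} : Finset (Fin m)).erase d := by
    ext e
    by_cases he : e = d <;> simp [he]
  rw [this]
  exact card_erase_lt_of_mem (by simpa using hXd)

lemma exists_nonRedundant_USW_eq (hv : ∀ h, IsMRF (v h)) (X : Fin m → Option (Fin n)) :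
    ∃ Y, NonRedundant v Y ∧ USW v Y = USW v X := by
  obtain ⟨Y, hY, hmin⟩ := (univ.filter fun Y => USW v Y = USW v X).exists_min_image
    (fun Y => #{e | Y e ≠ none}) ⟨X, by simp⟩
  rw [mem_filter] at hY
  refine ⟨Y, fun h => ?_, hY.2⟩
  by_contra hne
  obtain ⟨d, hd, hrem⟩ :=
    (hv h).exists_erase_eq_of_lt_card (lt_of_le_of_ne ((hv h).le_card _) hne)
  have hYd : Y d = some h := mem_bundle.mp hd
  have hle := hmin (Function.update Y d none) (by simp [USW_update_none hYd hrem, hY.2])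
  exact (card_allocated_update_none_lt (by simp [hYd])).not_ge hle

section Augment

variable (hv : ∀ h, IsMRF (v h)) (hX : NonRedundant v X) (hdh : X d ≠ some h)
  (haug : v h (insert d (bundle X h)) = v h (bundle X h) + 1)
include hv hX hdh haug

lemma NonRedundant.update_some : NonRedundant v (Function.update X d (some h)) := by
  intro g
  rcases eq_or_ne g h with rfl | hg
  · rw [bundle_update_some_self, haug, hX g, card_insert_of_notMem (mem_bundle.not.mpr hdh)]
    push_cast; ring
  · rw [bundle_update_some_of_ne X d hg]
    by_cases hXd : X d = some g
    · exact ((hv g).erase_eq_of_eq_card (hX g) (mem_bundle.mpr hXd)).1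
    · rw [bundle_erase_of_ne hXd, hX g]

lemma USW_update_some_add :
    USW v (Function.update X d (some h)) + ∑ g, (if X d = some g then 1 else 0) =
      USW v X + 1 := by
  have key : ∀ g, v g (bundle (Function.update X d (some h)) g) + (if X d = some g then 1 else 0)
      = v g (bundle X g) + if g = h then 1 else 0 := by
    intro g
    rcases eq_or_ne g h with rfl | hg
    · rw [bundle_update_some_self, haug, if_neg hdh, if_pos rfl, add_zero]
    · rw [bundle_update_some_of_ne X d hg, if_neg hg]
      by_cases hXd : X d = some g
      · rw [((hv g).erase_eq_of_eq_card (hX g) (mem_bundle.mpr hXd)).2, if_pos hXd]; ring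
      · rw [bundle_erase_of_ne hXd, if_neg hXd]
  rw [USW, ← sum_add_distrib, sum_congr rfl fun g _ => key g, sum_add_distrib, sum_ite_eq']
  rw [if_pos (mem_univ h)]
  rfl

end Augment

end Allocation

section PrefRank

variable {α : Type*} [Fintype α]

open Classical in
noncomputable def prefRank (r : α → α → Prop) : Option α → ℕ
  | none => 0
  | some a => #{b | ¬ r b a}

lemma prefRank_none_lt (r : α → α → Prop) [Std.Irrefl r] (a : α) :
    prefRank r none < prefRank r (some a) := by
  classical
  simp only [prefRank]
  exact card_pos.mpr ⟨a, by simpa using irrefl a⟩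

lemma prefRank_lt_of_rel (r : α → α → Prop) [IsStrictOrder α r] {a b : α} (hab : r a b) :
    prefRank r (some b) < prefRank r (some a) := by
  classical
  simp only [prefRank]
  refine card_lt_card ((ssubset_iff_of_subset fun c hc => ?_).mpr ⟨a, ?_, ?_⟩)
  · simp only [mem_filter, mem_univ, true_and] at hc ⊢
    exact fun hca => hc (_root_.trans hca hab)
  · simpa using irrefl a
  · simpa using hab

end PrefRank

section Potential

variable {n m : ℕ} {P : Fin m → Fin n → Fin n → Prop}

lemma prefRank_lt_of_optStrictPref {d : Fin m} [IsStrictOrder (Fin n) (P d)]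
    {a b : Option (Fin n)} (hab : OptStrictPref P d a b) :
    prefRank (P d) b < prefRank (P d) a :=
  match a, b, hab with
  | some _, none, _ => prefRank_none_lt _ _
  | some _, some _, hab => prefRank_lt_of_rel _ hab

noncomputable def potential (P : Fin m → Fin n → Fin n → Prop) (X : Fin m → Option (Fin n)) : ℕ :=
  ∑ d, prefRank (P d) (X d)

lemma potential_lt_update {X : Fin m → Option (Fin n)} {d : Fin m} [IsStrictOrder (Fin n) (P d)]
    {a : Option (Fin n)} (ha : OptStrictPref P d a (X d)) :
    potential P X < potential P (Function.update X d a) := by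
  refine sum_lt_sum (fun e _ => ?_) ⟨d, mem_univ d, ?_⟩
  · rcases eq_or_ne e d with rfl | he
    · simpa using (prefRank_lt_of_optStrictPref ha).le
    · simp [he]
  · simpa using prefRank_lt_of_optStrictPref ha

end Potential

lemma IsBlockingPair.exists_improvement {n m : ℕ} {v : Fin n → Finset (Fin m) → ℤ}
    {P : Fin m → Fin n → Fin n → Prop} {X : Fin m → Option (Fin n)} {h : Fin n}
    {S : Finset (Fin m)} (hv : ∀ h, IsMRF (v h)) (hP : ∀ d, IsStrictOrder (Fin n) (P d))
    (hX : NonRedundant v X) (hb : IsBlockingPair v P X h S) :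
    ∃ Y, NonRedundant v Y ∧ toLex (USW v X, potential P X) < toLex (USW v Y, potential P Y) := by
  obtain ⟨-, hlt, hpref⟩ := hb
  obtain ⟨d, hdS, hdh, haug⟩ := (hv h).exists_insert_eq_add_one_of_lt hlt
  have hXd : X d ≠ some h := mem_bundle.not.mp hdh
  have hsum := USW_update_some_add hv hX hXd haug
  refine ⟨_, hX.update_some hv hXd haug, Prod.Lex.toLex_lt_toLex.mpr ?_⟩
  cases hd : X d with
  | none =>
    left
    simp only [hd, reduceCtorEq, if_false, sum_const_zero] at hsum
    omega
  | some h' =>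
    right
    simp only [hd, Option.some.injEq, sum_ite_eq, mem_univ, if_true] at hsum
    refine ⟨by omega, ?_⟩
    have := hP d
    exact potential_lt_update ((hpref d hdS).resolve_left hXd)

/-- For every profile of matroid rank hospital valuations and strict complete doctor
preference orders, there exists a stable allocation maximizing hospital utilitarian
welfare over all allocations. -/
theorem exists_stable_max_usw {n m : ℕ} (v : Fin n → Finset (Fin m) → ℤ)
    (P : Fin m → Fin n → Fin n → Prop)
    (hv : ∀ h, IsMRF (v h)) (hP : ∀ d, IsStrictTotalOrder (Fin n) (P d)) :
    ∃ X : Fin m → Option (Fin n), Stable v P X ∧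
      ∀ Y : Fin m → Option (Fin n), USW v Y ≤ USW v X := by
  classical
  have hempty : NonRedundant v fun _ => none := fun h => by simp [bundle, (hv h).1]
  obtain ⟨X, hX, hmax⟩ := (univ.filter (NonRedundant v)).exists_max_image
    (fun X => toLex (USW v X, potential P X)) ⟨_, by simpa using hempty⟩
  rw [mem_filter] at hX
  have hmax' : ∀ Y, NonRedundant v Y →
      toLex (USW v Y, potential P Y) ≤ toLex (USW v X, potential P X) :=
    fun Y hY => hmax Y (by simpa using hY)
  refine ⟨X, ⟨hX.2, fun ⟨h, S, hb⟩ => ?_⟩, fun Y => ?_⟩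
  · obtain ⟨Y, hY, hlt⟩ :=
      hb.exists_improvement hv (fun d => (hP d).toIsStrictOrder) hX.2
    exact (hmax' Y hY).not_gt hlt
  · obtain ⟨Y', hY', hUSW⟩ := exists_nonRedundant_USW_eq hv Y
    rw [← hUSW]
    rcases Prod.Lex.le_iff.mp (hmax' Y' hY') with hlt | ⟨heq, -⟩
    exacts [hlt.le, heq.le]
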